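/- arXiv:1605.06839 — 2 statements merged into one kernel-verified Lean document; each statement's English description precedes it below -/
import Mathlib

section
/- For every s ∈ (0,1) and every t ∈ (0,π), one has the identity s²·(1 − t·cot(t)) − (1 − s·t·cot(s·t)) = 2·t⁴·s²·(1−s²)·Σ_{k=1}^∞ 1/((π²k² − t²)·(π²k² − s²t²)), and in particular this quantity is strictly positive. -/
/-!
Both sides come from the Mittag-Leffler expansion of the cotangent, which for real `t` with
`sin t ≠ 0` reads `1 - t cot t = ∑_{k ≥ 1} 2t² / (π²k² - t²)`. Taking `s²` times this expansion
at `t` minus the expansion at `s t`, the `k`-th terms combine into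
`2 t⁴ s² (1 - s²) / ((π²k² - t²)(π²k² - s²t²))`, which is positive for `s ∈ (0,1)`, `t ∈ (0,π)`.
-/

open Real

namespace Real

theorem hasSum_pi_mul_cot_pi_mul_sub_inv {x : ℝ} (hx : sin (π * x) ≠ 0) :
    HasSum (fun n : ℕ => 1 / (x - (n + 1)) + 1 / (x + (n + 1))) (π * cot (π * x) - 1 / x) := by
  have hxℤ : (x : ℂ) ∈ Complex.integerComplement := by
    rintro ⟨n, hn⟩
    rw [← Complex.ofReal_intCast, Complex.ofReal_inj] at hn
    exact hx (by simp [← hn, mul_comm π, sin_int_mul_pi])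
  have h := (summable_cotTerm hxℤ).hasSum
  rw [← cot_series_rep' hxℤ] at h
  refine Complex.hasSum_ofReal.mp ?_
  push_cast [Complex.ofReal_cot]
  exact h

theorem hasSum_one_sub_mul_cot {t : ℝ} (ht : sin t ≠ 0) :
    HasSum (fun k : ℕ => 2 * t ^ 2 / (π ^ 2 * ((k : ℝ) + 1) ^ 2 - t ^ 2)) (1 - t * cot t) := by
  have hπ : π ≠ 0 := pi_ne_zero
  have ht0 : t ≠ 0 := by rintro rfl; simp at ht
  have h := (hasSum_pi_mul_cot_pi_mul_sub_inv (x := t / π)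
    (by rwa [mul_div_cancel₀ _ hπ])).mul_left (-(t / π))
  rw [mul_div_cancel₀ _ hπ, show -(t / π) * (π * cot t - 1 / (t / π)) = 1 - t * cot t by
    field_simp; ring] at h
  refine h.congr_fun fun k => ?_
  have hne : ∀ n : ℤ, t ≠ n * π := fun n hn => ht (sin_eq_zero_iff.mpr ⟨n, hn.symm⟩)
  have hm : t - π * (k + 1) ≠ 0 := fun h => hne (k + 1) (by push_cast; linarith)
  have hp : t + π * (k + 1) ≠ 0 := fun h => hne (-(k + 1)) (by push_cast; linarith)
  have hq : π ^ 2 * ((k : ℝ) + 1) ^ 2 - t ^ 2 ≠ 0 := by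
    convert neg_ne_zero.mpr (mul_ne_zero hm hp) using 1
    ring
  field_simp
  ring

theorem sq_lt_pi_sq_mul_succ_sq {t : ℝ} (ht : t ^ 2 < π ^ 2) (k : ℕ) :
    t ^ 2 < π ^ 2 * ((k : ℝ) + 1) ^ 2 := by
  have hk : (1 : ℝ) ≤ ((k : ℝ) + 1) ^ 2 := one_le_pow₀ (by linarith [k.cast_nonneg (α := ℝ)])
  nlinarith [pi_pos]

end Real

theorem sq_mul_two_mul_sq_div_sub_sub_two_mul_sq_div_sub {a s t : ℝ} (hA : a - t ^ 2 ≠ 0)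
    (hB : a - s ^ 2 * t ^ 2 ≠ 0) :
    s ^ 2 * (2 * t ^ 2 / (a - t ^ 2)) - 2 * (s * t) ^ 2 / (a - (s * t) ^ 2) =
      2 * t ^ 4 * s ^ 2 * (1 - s ^ 2) * (1 / ((a - t ^ 2) * (a - s ^ 2 * t ^ 2))) := by
  rw [mul_pow]
  field_simp
  ring

/-- For every `s ∈ (0,1)` and `t ∈ (0,π)`:
`s²(1 − t cot t) − (1 − s t cot(s t)) = 2 t⁴ s² (1−s²) Σ_{k≥1} 1/((π²k² − t²)(π²k² − s²t²))`,
the series converges, and in particular this quantity is strictly positive. -/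
theorem sq_one_sub_cot_diff_series (s t : ℝ) (hs : s ∈ Set.Ioo (0 : ℝ) 1)
    (ht : t ∈ Set.Ioo 0 Real.pi) :
    Summable (fun k : ℕ =>
      1 /
        ((Real.pi ^ 2 * ((k : ℝ) + 1) ^ 2 - t ^ 2) *
          (Real.pi ^ 2 * ((k : ℝ) + 1) ^ 2 - s ^ 2 * t ^ 2))) ∧
    s ^ 2 * (1 - t * Real.cot t) - (1 - s * t * Real.cot (s * t)) =
      2 * t ^ 4 * s ^ 2 * (1 - s ^ 2) *
        ∑' k : ℕ,
          1 /
            ((Real.pi ^ 2 * ((k : ℝ) + 1) ^ 2 - t ^ 2) *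
              (Real.pi ^ 2 * ((k : ℝ) + 1) ^ 2 - s ^ 2 * t ^ 2)) ∧
    0 < s ^ 2 * (1 - t * Real.cot t) - (1 - s * t * Real.cot (s * t)) := by
  obtain ⟨hs0, hs1⟩ := hs
  obtain ⟨ht0, htπ⟩ := ht
  have hst : s * t < t := mul_lt_of_lt_one_left ht0 hs1
  have hA k := sq_lt_pi_sq_mul_succ_sq (t := t) (by gcongr) k
  have hB (k : ℕ) : s ^ 2 * t ^ 2 < π ^ 2 * ((k : ℝ) + 1) ^ 2 :=
    mul_pow s t 2 ▸ sq_lt_pi_sq_mul_succ_sq (by gcongr; linarith) k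
  set f : ℕ → ℝ := fun k => 1 / ((π ^ 2 * ((k : ℝ) + 1) ^ 2 - t ^ 2) *
    (π ^ 2 * ((k : ℝ) + 1) ^ 2 - s ^ 2 * t ^ 2))
  have hC : 0 < 2 * t ^ 4 * s ^ 2 * (1 - s ^ 2) := by
    have : 0 < 1 - s ^ 2 := by nlinarith
    positivity
  have hsum_t := hasSum_one_sub_mul_cot (sin_pos_of_pos_of_lt_pi ht0 htπ).ne'
  have hsum_st := hasSum_one_sub_mul_cot
    (sin_pos_of_pos_of_lt_pi (mul_pos hs0 ht0) (hst.trans htπ)).ne'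
  have hsum : HasSum (fun k => 2 * t ^ 4 * s ^ 2 * (1 - s ^ 2) * f k)
      (s ^ 2 * (1 - t * cot t) - (1 - s * t * cot (s * t))) :=
    ((hsum_t.mul_left (s ^ 2)).sub hsum_st).congr_fun fun k =>
      (sq_mul_two_mul_sq_div_sub_sub_two_mul_sq_div_sub (sub_pos.mpr (hA k)).ne'
        (sub_pos.mpr (hB k)).ne').symm
  have hf : Summable f := (summable_mul_left_iff hC.ne').mp hsum.summable
  have hf_pos k : 0 < f k := by
    have := sub_pos.mpr (hA k)
    have := sub_pos.mpr (hB k)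
    positivity
  rw [← hsum.tsum_eq, tsum_mul_left]
  exact ⟨hf, rfl, mul_pos hC (hf.tsum_pos (fun k => (hf_pos k).le) 0 (hf_pos 0))⟩
end

section
/- For every integer n ≥ 1, every s ∈ (0,1) and every θ ∈ [0,2π), the Heisenberg distortion coefficient satisfies τ_s^n(θ) ≥ s^{(2n+3)/(2n+1)} = τ_s^n(0). -/
/-!
With `x = θ / 2`, the coefficient is `s^{1/(2n+1)} (sin(sx)/sin x)^{(2n-1)/(2n+1)} (f(sx)/f(x))^{1/(2n+1)}`
where `f t = sin t - t cos t`, and `s^{(2n+3)/(2n+1)}` splits the same way with `s` and `s³` in place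
of the two ratios. So it suffices that `s sin x ≤ sin (sx)`, which is concavity of `sin` on `[0, π]`,
and `s³ f(x) ≤ f(sx)`: the difference `f(st) - s³ f(t)` vanishes at `t = 0` and has derivative
`s² t (sin(st) - s sin t) ≥ 0`, since `f' t = t sin t`.
-/

open Real Set

namespace Real

lemma hasDerivAt_sin_sub_mul_cos (t : ℝ) :
    HasDerivAt (fun t => sin t - t * cos t) (t * sin t) t := by
  refine ((hasDerivAt_sin t).sub ((hasDerivAt_id' t).mul (hasDerivAt_cos t))).congr_deriv ?_
  ring

lemma sin_sub_mul_cos_pos {x : ℝ} (hx₀ : 0 < x) (hxπ : x ≤ π) : 0 < sin x - x * cos x := by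
  have hmono : StrictMonoOn (fun t => sin t - t * cos t) (Icc 0 π) := by
    refine strictMonoOn_of_hasDerivWithinAt_pos (convex_Icc 0 π) (by fun_prop)
      (fun t _ => (hasDerivAt_sin_sub_mul_cos t).hasDerivWithinAt) fun t ht => ?_
    rw [interior_Icc] at ht
    exact mul_pos ht.1 (sin_pos_of_pos_of_lt_pi ht.1 ht.2)
  simpa using hmono ⟨le_rfl, pi_pos.le⟩ ⟨hx₀.le, hxπ⟩ hx₀

lemma mul_sin_le_sin_mul {s x : ℝ} (hs₀ : 0 ≤ s) (hs₁ : s ≤ 1) (hx₀ : 0 ≤ x) (hxπ : x ≤ π) :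
    s * sin x ≤ sin (s * x) := by
  simpa using strictConcaveOn_sin_Icc.concaveOn.2 ⟨le_rfl, pi_pos.le⟩ ⟨hx₀, hxπ⟩
    (sub_nonneg.2 hs₁) hs₀ (by ring)

lemma pow_three_mul_sin_sub_mul_cos_le {s x : ℝ} (hs₀ : 0 ≤ s) (hs₁ : s ≤ 1) (hx₀ : 0 ≤ x)
    (hxπ : x ≤ π) :
    s ^ 3 * (sin x - x * cos x) ≤ sin (s * x) - s * x * cos (s * x) := by
  set k : ℝ → ℝ := fun t => sin (s * t) - s * t * cos (s * t) - s ^ 3 * (sin t - t * cos t)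
  have hk : ∀ t, HasDerivAt k (s ^ 2 * t * (sin (s * t) - s * sin t)) t := fun t => by
    have hscale := (hasDerivAt_sin_sub_mul_cos (s * t)).comp t ((hasDerivAt_id t).const_mul s)
    refine (hscale.sub ((hasDerivAt_sin_sub_mul_cos t).const_mul (s ^ 3))).congr_deriv ?_
    ring
  have hmono : MonotoneOn k (Icc 0 π) := by
    refine monotoneOn_of_hasDerivWithinAt_nonneg (convex_Icc 0 π)
      (fun t _ => (hk t).continuousAt.continuousWithinAt) (fun t _ => (hk t).hasDerivWithinAt)
      fun t ht => ?_
    rw [interior_Icc] at ht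
    exact mul_nonneg (mul_nonneg (sq_nonneg s) ht.1.le)
      (sub_nonneg.2 (mul_sin_le_sin_mul hs₀ hs₁ ht.1.le ht.2.le))
  simpa [k] using hmono ⟨le_rfl, pi_pos.le⟩ ⟨hx₀, hxπ⟩ hx₀

end Real

lemma rpow_add_add_mul_le_mul_rpow {s a b k r p q : ℝ} (hs : 0 < s) (ha : s ≤ a)
    (hb : s ^ k ≤ b) (hp : 0 ≤ p) (hq : 0 ≤ q) :
    s ^ (r + p + k * q) ≤ s ^ r * a ^ p * b ^ q := by
  rw [rpow_add hs, rpow_add hs, rpow_mul hs.le]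
  gcongr
  exact mul_nonneg (rpow_nonneg hs.le r) (rpow_nonneg (hs.le.trans ha) p)

/-- The Heisenberg distortion coefficient `τ_s^n` on `[0, 2π)`. -/
noncomputable def heisenbergTau (n : ℕ) (s θ : ℝ) : ℝ :=
  if θ = 0 then s ^ ((2 * (n : ℝ) + 3) / (2 * (n : ℝ) + 1))
  else
    s ^ ((1 : ℝ) / (2 * (n : ℝ) + 1)) *
      (Real.sin (θ * s / 2) / Real.sin (θ / 2)) ^ ((2 * (n : ℝ) - 1) / (2 * (n : ℝ) + 1)) *
      ((Real.sin (θ * s / 2) - (θ * s / 2) * Real.cos (θ * s / 2)) /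
          (Real.sin (θ / 2) - (θ / 2) * Real.cos (θ / 2))) ^ ((1 : ℝ) / (2 * (n : ℝ) + 1))

/-- For every integer `n ≥ 1`, `s ∈ (0,1)` and `θ ∈ [0, 2π)`, one has
`τ_s^n(θ) ≥ s^{(2n+3)/(2n+1)} = τ_s^n(0)`. -/
theorem heisenbergTau_ge (n : ℕ) (hn : 1 ≤ n) (s : ℝ) (hs : s ∈ Set.Ioo (0 : ℝ) 1)
    (θ : ℝ) (hθ₀ : 0 ≤ θ) (hθ : θ < 2 * Real.pi) :
    s ^ ((2 * (n : ℝ) + 3) / (2 * (n : ℝ) + 1)) ≤ heisenbergTau n s θ ∧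
      heisenbergTau n s 0 = s ^ ((2 * (n : ℝ) + 3) / (2 * (n : ℝ) + 1)) := by
  have h0 : heisenbergTau n s 0 = s ^ ((2 * (n : ℝ) + 3) / (2 * (n : ℝ) + 1)) := if_pos rfl
  refine ⟨?_, h0⟩
  rcases hθ₀.eq_or_lt with rfl | hθpos
  · exact h0.ge
  obtain ⟨x, rfl⟩ : ∃ x, θ = 2 * x := ⟨θ / 2, by ring⟩
  have hx₀ : 0 < x := by linarith
  have hxπ : x ≤ π := by linarith
  rw [heisenbergTau, if_neg hθpos.ne', show 2 * x * s / 2 = s * x by ring,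
    show 2 * x / 2 = x by ring]
  have hsin : s ≤ sin (s * x) / sin x :=
    (le_div_iff₀ (sin_pos_of_pos_of_lt_pi hx₀ (by linarith))).2
      (mul_sin_le_sin_mul hs.1.le hs.2.le hx₀.le hxπ)
  have hf : s ^ (3 : ℝ) ≤ (sin (s * x) - s * x * cos (s * x)) / (sin x - x * cos x) := by
    rw [rpow_ofNat, le_div_iff₀ (sin_sub_mul_cos_pos hx₀ hxπ)]
    exact pow_three_mul_sin_sub_mul_cos_le hs.1.le hs.2.le hx₀.le hxπ
  have hn' : (1 : ℝ) ≤ n := by exact_mod_cast hn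
  calc s ^ ((2 * (n : ℝ) + 3) / (2 * (n : ℝ) + 1))
      = s ^ (1 / (2 * (n : ℝ) + 1) + (2 * n - 1) / (2 * n + 1) + 3 * (1 / (2 * n + 1))) := by
        congr 1; field_simp; ring
    _ ≤ _ := rpow_add_add_mul_le_mul_rpow hs.1 hsin hf (by bound) (by positivity)
end
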